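/- For every real t with |t| ≤ π²/4, it holds that |Φ(t) − 1| ≤ 4|t|/π², where Φ(x) := √(−x)·coth(√(−x)) for x < 0, Φ(0) := 1, and Φ(x) := √x·cot(√x) for 0 < x < π². -/

import Mathlib

/-- The function `Φ`, satisfying `Φ(K x²) = x cot_K x`. -/
noncomputable def Phi (x : ℝ) : ℝ :=
  if x < 0 then Real.sqrt (-x) * (Real.cosh (Real.sqrt (-x)) / Real.sinh (Real.sqrt (-x)))
  else if x = 0 then 1
  else Real.sqrt x * (Real.cos (Real.sqrt x) / Real.sin (Real.sqrt x))

/-!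
For `t = -x² < 0` the bounds `1 ≤ x coth x ≤ 1 + x²/3` suffice, since `π² ≤ 12`.
For `t = x² > 0` we have `x cot x ≤ 1`, and `(1 - x cot x) / x²` is increasing on `(0, π/2]`
(it is `2 ∑ 1 / (n²π² - x²)` by the partial fraction expansion of `cot`), so it is at most its
value `4 / π²` at `π/2`. Differentiating, the monotonicity reduces to
`y² - 4 + 4 cos y + y sin y ≥ 0` on `[0, π]`: this function and its first three derivatives
vanish at `0`, and its fourth derivative `y sin y` is nonnegative there.
-/

open Real Set

lemma nonneg_of_hasDerivAt_of_deriv_nonneg {f f' : ℝ → ℝ} {b : ℝ}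
    (hf : ∀ x, HasDerivAt f (f' x) x) (h0 : f 0 = 0) (hb : 0 ≤ b)
    (hf' : ∀ x ∈ Icc 0 b, 0 ≤ f' x) : 0 ≤ f b := by
  have hmono : MonotoneOn f (Icc 0 b) :=
    monotoneOn_of_hasDerivWithinAt_nonneg (convex_Icc 0 b)
      (fun x _ => (hf x).continuousAt.continuousWithinAt)
      (fun x _ => (hf x).hasDerivWithinAt) (fun x hx => hf' x (interior_subset hx))
  simpa [h0] using hmono (left_mem_Icc.2 hb) (right_mem_Icc.2 hb) hb

section Trigonometric

variable {y : ℝ}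

lemma hasDerivAt_sin_sub_mul_cos (y : ℝ) :
    HasDerivAt (fun x => sin x - x * cos x) (y * sin y) y :=
  ((hasDerivAt_sin y).sub ((hasDerivAt_id' y).mul (hasDerivAt_cos y))).congr_deriv (by ring)

lemma sin_sub_mul_cos_nonneg (h0 : 0 ≤ y) (hπ : y ≤ π) : 0 ≤ sin y - y * cos y :=
  nonneg_of_hasDerivAt_of_deriv_nonneg (b := y) hasDerivAt_sin_sub_mul_cos (by simp) h0
    fun x hx => mul_nonneg hx.1 (sin_nonneg_of_nonneg_of_le_pi hx.1 (hx.2.trans hπ))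

lemma two_sub_two_mul_cos_sub_mul_sin_nonneg (h0 : 0 ≤ y) (hπ : y ≤ π) :
    0 ≤ 2 - 2 * cos y - y * sin y := by
  refine nonneg_of_hasDerivAt_of_deriv_nonneg (f := fun y => 2 - 2 * cos y - y * sin y)
    (fun x => ?_) (by simp) h0
    fun x hx => sin_sub_mul_cos_nonneg hx.1 (hx.2.trans hπ)
  exact (((hasDerivAt_cos x).const_mul 2).const_sub 2 |>.sub
    ((hasDerivAt_id' x).mul (hasDerivAt_sin x))).congr_deriv (by ring)

lemma two_mul_sub_three_mul_sin_add_mul_cos_nonneg (h0 : 0 ≤ y) (hπ : y ≤ π) :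
    0 ≤ 2 * y - 3 * sin y + y * cos y := by
  refine nonneg_of_hasDerivAt_of_deriv_nonneg (f := fun y => 2 * y - 3 * sin y + y * cos y)
    (fun x => ?_) (by simp) h0
    fun x hx => two_sub_two_mul_cos_sub_mul_sin_nonneg hx.1 (hx.2.trans hπ)
  exact (((hasDerivAt_id' x).const_mul 2).sub ((hasDerivAt_sin x).const_mul 3) |>.add
    ((hasDerivAt_id' x).mul (hasDerivAt_cos x))).congr_deriv (by ring)

lemma sq_sub_four_add_four_mul_cos_add_mul_sin_nonneg (h0 : 0 ≤ y) (hπ : y ≤ π) :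
    0 ≤ y ^ 2 - 4 + 4 * cos y + y * sin y := by
  refine nonneg_of_hasDerivAt_of_deriv_nonneg (f := fun y => y ^ 2 - 4 + 4 * cos y + y * sin y)
    (fun x => ?_) (by norm_num) h0
    fun x hx => two_mul_sub_three_mul_sin_add_mul_cos_nonneg hx.1 (hx.2.trans hπ)
  exact (((hasDerivAt_pow 2 x).sub_const 4).add ((hasDerivAt_cos x).const_mul 4) |>.add
    ((hasDerivAt_id' x).mul (hasDerivAt_sin x))).congr_deriv (by push_cast; ring)

lemma hasDerivAt_sin_sub_mul_cos_div (hy : sin y ≠ 0) (hy0 : y ≠ 0) :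
    HasDerivAt (fun x => (sin x - x * cos x) / (x ^ 2 * sin x))
      ((y * sin y * (y ^ 2 * sin y) - (sin y - y * cos y) * (2 * y * sin y + y ^ 2 * cos y))
        / (y ^ 2 * sin y) ^ 2) y := by
  have hv : HasDerivAt (fun x => x ^ 2 * sin x) (2 * y * sin y + y ^ 2 * cos y) y :=
    ((hasDerivAt_pow 2 y).mul (hasDerivAt_sin y)).congr_deriv (by push_cast; ring)
  exact (hasDerivAt_sin_sub_mul_cos y).div hv (mul_ne_zero (pow_ne_zero 2 hy0) hy)

lemma monotoneOn_sin_sub_mul_cos_div :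
    MonotoneOn (fun x => (sin x - x * cos x) / (x ^ 2 * sin x)) (Ioc 0 (π / 2)) := by
  have hsin : ∀ x ∈ Ioc 0 (π / 2), sin x ≠ 0 := fun x hx =>
    (sin_pos_of_pos_of_lt_pi hx.1 (by linarith [hx.2, pi_pos])).ne'
  have hderiv := fun x (hx : x ∈ Ioc 0 (π / 2)) =>
    hasDerivAt_sin_sub_mul_cos_div (hsin x hx) hx.1.ne'
  refine monotoneOn_of_hasDerivWithinAt_nonneg (convex_Ioc 0 _)
    (fun x hx => (hderiv x hx).continuousAt.continuousWithinAt)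
    (fun x hx => (hderiv x (interior_subset hx)).hasDerivWithinAt) fun x hx => ?_
  rw [interior_Ioc] at hx
  refine div_nonneg ?_ (sq_nonneg _)
  -- by the double-angle formulas the numerator is `x / 4 * (t² - 4 + 4 cos t + t sin t)`, `t = 2x`
  have h := sq_sub_four_add_four_mul_cos_add_mul_sin_nonneg (y := 2 * x) (by linarith [hx.1])
    (by linarith [hx.2])
  rw [cos_two_mul', sin_two_mul] at h
  have hx0 : 0 ≤ x / 4 := by linarith [hx.1]
  linear_combination (x - x ^ 3) * sin_sq_add_cos_sq x + mul_nonneg hx0 h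

lemma sin_sub_mul_cos_le (hy0 : 0 < y) (hy : y ≤ π / 2) :
    sin y - y * cos y ≤ 4 / π ^ 2 * (y ^ 2 * sin y) := by
  have hsin : 0 < sin y := sin_pos_of_pos_of_lt_pi hy0 (by linarith [pi_pos])
  have hmono := monotoneOn_sin_sub_mul_cos_div ⟨hy0, hy⟩ ⟨by positivity, le_rfl⟩ hy
  simp only [sin_pi_div_two, cos_pi_div_two, mul_zero, sub_zero, mul_one] at hmono
  rw [div_le_iff₀ (by positivity)] at hmono
  rwa [show 1 / (π / 2) ^ 2 = 4 / π ^ 2 by ring] at hmono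

end Trigonometric

section Hyperbolic

variable {x : ℝ}

lemma sinh_le_mul_cosh (hx : 0 ≤ x) : sinh x ≤ x * cosh x := by
  refine sub_nonneg.1 <| nonneg_of_hasDerivAt_of_deriv_nonneg (f := fun y => y * cosh y - sinh y)
    (fun y => ?_) (by simp) hx
    fun y hy => mul_nonneg hy.1 (sinh_nonneg_iff.2 hy.1)
  exact (((hasDerivAt_id' y).mul (hasDerivAt_cosh y)).sub (hasDerivAt_sinh y)).congr_deriv (by ring)

lemma mul_cosh_le (hx : 0 ≤ x) : x * cosh x ≤ (1 + x ^ 2 / 3) * sinh x := by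
  refine sub_nonneg.1 <| nonneg_of_hasDerivAt_of_deriv_nonneg
    (f := fun y => (1 + y ^ 2 / 3) * sinh y - y * cosh y) (fun y => ?_) (by simp) hx
    fun y hy => mul_nonneg (by linarith [hy.1] : 0 ≤ y / 3) (sub_nonneg.2 (sinh_le_mul_cosh hy.1))
  exact ((((hasDerivAt_pow 2 y).div_const 3).const_add 1).mul (hasDerivAt_sinh y) |>.sub
    ((hasDerivAt_id' y).mul (hasDerivAt_cosh y))).congr_deriv (by push_cast; ring)

end Hyperbolic

section Phi

variable {x : ℝ}

lemma Phi_sq (hx : 0 < x) : Phi (x ^ 2) = x * (cos x / sin x) := by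
  rw [Phi, if_neg (not_lt.2 (by positivity)), if_neg (by positivity), sqrt_sq hx.le]

lemma Phi_neg_sq (hx : 0 < x) : Phi (-x ^ 2) = x * (cosh x / sinh x) := by
  rw [Phi, if_pos (neg_neg_of_pos (by positivity)), neg_neg, sqrt_sq hx.le]

lemma Phi_sq_le_one (hx0 : 0 < x) (hx : x < π) : Phi (x ^ 2) ≤ 1 := by
  rw [Phi_sq hx0, ← mul_div_assoc, div_le_one (sin_pos_of_pos_of_lt_pi hx0 hx)]
  linarith [sin_sub_mul_cos_nonneg hx0.le hx.le]

lemma one_sub_le_Phi_sq (hx0 : 0 < x) (hx : x ≤ π / 2) :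
    1 - 4 * x ^ 2 / π ^ 2 ≤ Phi (x ^ 2) := by
  have hsin : 0 < sin x := sin_pos_of_pos_of_lt_pi hx0 (by linarith [pi_pos])
  rw [Phi_sq hx0, ← mul_div_assoc, le_div_iff₀ hsin]
  linarith [sin_sub_mul_cos_le hx0 hx, show (1 - 4 * x ^ 2 / π ^ 2) * sin x =
    sin x - 4 / π ^ 2 * (x ^ 2 * sin x) by ring]

lemma one_le_Phi_neg_sq (hx : 0 < x) : 1 ≤ Phi (-x ^ 2) := by
  rw [Phi_neg_sq hx, ← mul_div_assoc, le_div_iff₀ (sinh_pos_iff.2 hx), one_mul]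
  exact sinh_le_mul_cosh hx.le

lemma Phi_neg_sq_le (hx : 0 < x) : Phi (-x ^ 2) ≤ 1 + x ^ 2 / 3 := by
  rw [Phi_neg_sq hx, ← mul_div_assoc, div_le_iff₀ (sinh_pos_iff.2 hx)]
  exact mul_cosh_le hx.le

end Phi

lemma pi_sq_le_twelve : π ^ 2 ≤ 12 := by
  nlinarith [pi_lt_d2, pi_pos]

/-- `|Φ(t) - 1| ≤ 4|t|/π²` for `|t| ≤ π²/4`. -/
theorem Phi_near_one (t : ℝ) (ht : |t| ≤ Real.pi ^ 2 / 4) :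
    |Phi t - 1| ≤ 4 * |t| / Real.pi ^ 2 := by
  have hπ : 0 < π ^ 2 := by positivity
  rcases lt_trichotomy t 0 with ht0 | rfl | ht0
  · obtain ⟨x, hx, rfl⟩ : ∃ x, 0 < x ∧ t = -x ^ 2 :=
      ⟨√(-t), sqrt_pos.2 (neg_pos.2 ht0), by rw [sq_sqrt (neg_nonneg.2 ht0.le), neg_neg]⟩
    have hthird : x ^ 2 / 3 ≤ 4 * x ^ 2 / π ^ 2 := by
      rw [div_le_div_iff₀ (by norm_num) hπ]
      nlinarith [pi_sq_le_twelve, sq_nonneg x]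
    rw [abs_of_neg ht0, neg_neg, abs_of_nonneg (sub_nonneg.2 (one_le_Phi_neg_sq hx))]
    linarith [Phi_neg_sq_le hx]
  · simp [Phi]
  · obtain ⟨x, hx, rfl⟩ : ∃ x, 0 < x ∧ t = x ^ 2 := ⟨√t, sqrt_pos.2 ht0, (sq_sqrt ht0.le).symm⟩
    have hxπ : x ≤ π / 2 := by
      rw [abs_of_pos ht0] at ht
      nlinarith [pi_pos]
    have hle := Phi_sq_le_one hx (by linarith [pi_pos])
    rw [abs_of_pos ht0, abs_sub_comm, abs_of_nonneg (sub_nonneg.2 hle)]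
    linarith [one_sub_le_Phi_sq hx hxπ]
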